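/- Let α ≥ 1 and let s be a real number with 0 ≤ s < 1. Then the series ∑_{n=0}^∞ ((−s)^n / n!) · Γ(1 + n/α) converges and ∫₀^∞ e^{-s t} · α t^{α−1} e^{-t^α} dt = ∑_{n=0}^∞ ((−s)^n / n!) · Γ(1 + n/α), where Γ denotes the Gamma function. -/

import Mathlib

open Real MeasureTheory Set

/-!
Expand `e^{-st} = ∑ (-st)ⁿ/n!` under the integral. The `n`-th term integrates against the
Weibull density to `(-s)ⁿ/n! · Γ(1 + n/α)`, and since `α ≥ 1` puts `1 + n/α` in `[1, n + 1]`,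
convexity of `Γ` bounds `Γ(1 + n/α)` by `max (Γ 1) (Γ (n + 1)) = n!`. The absolute series is
therefore dominated by `∑ sⁿ`, which converges for `s < 1` and justifies the interchange.
-/

noncomputable def weibullDensity (α t : ℝ) : ℝ := α * t ^ (α - 1) * exp (-t ^ α)

lemma weibullDensity_nonneg {α t : ℝ} (hα : 0 ≤ α) (ht : 0 ≤ t) : 0 ≤ weibullDensity α t := by
  unfold weibullDensity
  positivity

lemma pow_mul_weibullDensity {α t : ℝ} (ht : 0 < t) (n : ℕ) :
    t ^ n * weibullDensity α t = α * (t ^ ((n : ℝ) + α - 1) * exp (-t ^ α)) := by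
  rw [weibullDensity, add_sub_assoc, rpow_add ht, rpow_natCast]
  ring

lemma integrableOn_pow_mul_weibullDensity {α : ℝ} (hα : 0 < α) (n : ℕ) :
    IntegrableOn (fun t => t ^ n * weibullDensity α t) (Ioi 0) := by
  have hexp : (-1 : ℝ) < n + α - 1 := by linarith [n.cast_nonneg (α := ℝ)]
  exact IntegrableOn.congr_fun ((integrableOn_rpow_mul_exp_neg_rpow hexp hα).const_mul α)
    (fun t ht => (pow_mul_weibullDensity ht n).symm) measurableSet_Ioi

lemma integral_pow_mul_weibullDensity {α : ℝ} (hα : 0 < α) (n : ℕ) :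
    ∫ t in Ioi 0, t ^ n * weibullDensity α t = Gamma (1 + n / α) := by
  have hexp : (-1 : ℝ) < n + α - 1 := by linarith [n.cast_nonneg (α := ℝ)]
  rw [setIntegral_congr_fun measurableSet_Ioi (fun t ht => pow_mul_weibullDensity ht n),
    integral_const_mul, integral_rpow_mul_exp_neg_rpow hα hexp]
  rw [show ((n : ℝ) + α - 1 + 1) / α = 1 + n / α by field_simp; ring]
  field_simp

lemma integral_norm_pow_mul_weibullDensity {α : ℝ} (hα : 0 < α) (n : ℕ) :
    ∫ t in Ioi 0, ‖t ^ n * weibullDensity α t‖ = Gamma (1 + n / α) := by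
  rw [← integral_pow_mul_weibullDensity hα n]
  refine setIntegral_congr_fun measurableSet_Ioi fun t (ht : 0 < t) => ?_
  exact Real.norm_of_nonneg (mul_nonneg (by positivity) (weibullDensity_nonneg hα.le ht.le))

lemma Gamma_le_factorial_of_mem_Icc {x : ℝ} {n : ℕ} (hx : x ∈ Icc 1 ((n : ℝ) + 1)) :
    Gamma x ≤ n.factorial := by
  have hseg : x ∈ segment ℝ 1 ((n : ℝ) + 1) := by
    rwa [segment_eq_Icc (by linarith [n.cast_nonneg (α := ℝ)])]
  calc Gamma x ≤ max (Gamma 1) (Gamma ((n : ℝ) + 1)) :=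
        convexOn_Gamma.le_on_segment (mem_Ioi.2 one_pos) (mem_Ioi.2 (by positivity)) hseg
    _ = n.factorial := by
        rw [Gamma_one, Gamma_nat_eq_factorial]
        exact max_eq_right (by exact_mod_cast n.factorial_pos)

lemma one_add_div_mem_Icc {α : ℝ} (hα : 1 ≤ α) (n : ℕ) :
    1 + (n : ℝ) / α ∈ Icc 1 ((n : ℝ) + 1) := by
  have hn : (0 : ℝ) ≤ n := n.cast_nonneg
  refine ⟨by linarith [div_nonneg hn (zero_le_one.trans hα)], ?_⟩
  linarith [div_le_self hn hα]

theorem hasSum_integral_exp_mul {μ : Measure ℝ} {ρ : ℝ → ℝ} (x : ℝ)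
    (hint : ∀ n : ℕ, Integrable (fun t => t ^ n * ρ t) μ)
    (hsum : Summable fun n : ℕ => |x| ^ n / n.factorial * ∫ t, ‖t ^ n * ρ t‖ ∂μ) :
    HasSum (fun n : ℕ => x ^ n / n.factorial * ∫ t, t ^ n * ρ t ∂μ)
      (∫ t, exp (x * t) * ρ t ∂μ) := by
  set F : ℕ → ℝ → ℝ := fun n t => x ^ n / n.factorial * (t ^ n * ρ t)
  have hnorm : ∀ n, ∫ t, ‖F n t‖ ∂μ = |x| ^ n / n.factorial * ∫ t, ‖t ^ n * ρ t‖ ∂μ := by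
    intro n
    simp only [F, norm_mul, norm_div, norm_pow, Real.norm_eq_abs, Nat.abs_cast]
    exact integral_const_mul _ _
  have hexp : ∀ t, ∑' n, F n t = exp (x * t) * ρ t := by
    intro t
    rw [Real.exp_eq_exp_ℝ,
      ← ((NormedSpace.expSeries_div_hasSum_exp (x * t)).mul_right (ρ t)).tsum_eq]
    exact tsum_congr fun n => by simp only [F, mul_pow]; ring
  have key := hasSum_integral_of_summable_integral_norm (F := F) (fun n => (hint n).const_mul _)
    (by simpa only [hnorm] using hsum)
  simp only [hexp, F, integral_const_mul] at key
  exact key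

/-- Power-series representation of the Laplace–Stieltjes transform of the Weibull
distribution `W(1, α)` for `α ≥ 1` and `0 ≤ s < 1`: the series
`∑ₙ ((-s)ⁿ/n!) Γ(1 + n/α)` converges to `∫₀^∞ e^{-st} α t^{α-1} e^{-t^α} dt`. -/
theorem weibull_laplace_series (α s : ℝ) (hα : 1 ≤ α) (hs0 : 0 ≤ s) (hs1 : s < 1) :
    HasSum (fun n : ℕ => (-s) ^ n / (n.factorial : ℝ) * Gamma (1 + n / α))
      (∫ t in Ioi (0 : ℝ), exp (-s * t) * (α * t ^ (α - 1) * exp (-t ^ α))) := by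
  have hα0 : 0 < α := zero_lt_one.trans_le hα
  have hsum : Summable fun n : ℕ =>
      |-s| ^ n / n.factorial * ∫ t in Ioi 0, ‖t ^ n * weibullDensity α t‖ := by
    refine (summable_geometric_of_lt_one hs0 hs1).of_nonneg_of_le (fun n => ?_) (fun n => ?_)
    · rw [integral_norm_pow_mul_weibullDensity hα0]
      have := Gamma_pos_of_pos (by positivity : 0 < 1 + (n : ℝ) / α)
      positivity
    · rw [integral_norm_pow_mul_weibullDensity hα0, abs_neg, abs_of_nonneg hs0, div_mul_comm]
      refine mul_le_of_le_one_left (pow_nonneg hs0 n) ?_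
      rw [div_le_one (by exact_mod_cast n.factorial_pos)]
      exact Gamma_le_factorial_of_mem_Icc (one_add_div_mem_Icc hα n)
  have := hasSum_integral_exp_mul (-s) (integrableOn_pow_mul_weibullDensity hα0) hsum
  simp only [integral_pow_mul_weibullDensity hα0] at this
  exact this
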